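/- arXiv:1307.0685 — 4 statements merged into one kernel-verified Lean document; each statement's English description precedes it below -/
import Mathlib

section
/- Let M_1 ≥ M_2 ≥ M_3 and N be positive integers, and let d_{ij} (i ≠ j, i,j ∈ {1,2,3}) be nonnegative reals satisfying, for every permutation {i,j,k} of {1,2,3}: d_{ij} + d_{ik} ≤ min(N, M_i, M_j + M_k), d_{ji} + d_{ki} ≤ min(N, M_i, M_j + M_k), d_{ij} + d_{ik} + max(d_{jk}, d_{kj}) ≤ min(N, M_j + M_k), and d_{ji} + d_{ki} + max(d_{jk}, d_{kj}) ≤ min(N, M_j + M_k). Then the total D_t = Σ_{i≠j} d_{ij} satisfies D_t ≤ min(2N, M_1 + M_2 + M_3, 2M_2 + 2M_3). -/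
/-! Each of the three bounds is a sum of hypotheses: the per-user antenna bounds of users 1, 2, 3
add up to `M1 + M2 + M3`, while the two genie-aided bounds `hg1, hg2` (for the relay term) and
`hg1, hg4` (for the `M2 + M3` term), with each `max` bounded below by a suitable entry, cover all
six `d`'s between them. -/

theorem add_le_of_add_max_le_left {α : Type*} [Add α] [LinearOrder α]
    [AddLeftMono α] {a b c m : α} (h : a + max b c ≤ m) : a + b ≤ m :=
  (add_le_add_right (le_max_left b c) a).trans h

theorem add_le_of_add_max_le_right {α : Type*} [Add α] [LinearOrder α]
    [AddLeftMono α] {a b c m : α} (h : a + max b c ≤ m) : a + c ≤ m :=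
  (add_le_add_right (le_max_right b c) a).trans h

theorem stmt_4_general (M1 M2 M3 N : ℕ)
    (d12 d13 d21 d23 d31 d32 : ℝ)
    (hu1 : d12 + d13 ≤ min (N : ℝ) (min (M1 : ℝ) ((M2 : ℝ) + M3)))
    (hu2 : d21 + d23 ≤ min (N : ℝ) (min (M2 : ℝ) ((M1 : ℝ) + M3)))
    (hu3 : d31 + d32 ≤ min (N : ℝ) (min (M3 : ℝ) ((M1 : ℝ) + M2)))
    (hg1 : d12 + d13 + max d23 d32 ≤ min (N : ℝ) ((M2 : ℝ) + M3))
    (hg2 : d21 + d23 + max d13 d31 ≤ min (N : ℝ) ((M1 : ℝ) + M3))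
    (hg4 : d21 + d31 + max d23 d32 ≤ min (N : ℝ) ((M2 : ℝ) + M3)) :
    d12 + d13 + d21 + d23 + d31 + d32
      ≤ min (2 * (N : ℝ)) (min ((M1 : ℝ) + M2 + M3) (2 * (M2 : ℝ) + 2 * M3)) := by
  have user1 : d12 + d13 ≤ (M1 : ℝ) := hu1.trans (min_le_of_right_le (min_le_left _ _))
  have user2 : d21 + d23 ≤ (M2 : ℝ) := hu2.trans (min_le_of_right_le (min_le_left _ _))
  have user3 : d31 + d32 ≤ (M3 : ℝ) := hu3.trans (min_le_of_right_le (min_le_left _ _))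
  have relay1 : d12 + d13 + d32 ≤ (N : ℝ) :=
    add_le_of_add_max_le_right (hg1.trans (min_le_left _ _))
  have relay2 : d21 + d23 + d31 ≤ (N : ℝ) :=
    add_le_of_add_max_le_right (hg2.trans (min_le_left _ _))
  have pair1 : d12 + d13 + d23 ≤ (M2 : ℝ) + M3 :=
    add_le_of_add_max_le_left (hg1.trans (min_le_right _ _))
  have pair2 : d21 + d31 + d32 ≤ (M2 : ℝ) + M3 :=
    add_le_of_add_max_le_right (hg4.trans (min_le_right _ _))
  exact le_min (by linarith) (le_min (by linarith) (by linarith))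

/-- Theorem 1: total DoF bound for the MIMO Y channel. -/
theorem stmt_4 (M1 M2 M3 N : ℕ) (hM1 : 0 < M1) (hM2 : 0 < M2) (hM3 : 0 < M3)
    (hN : 0 < N) (hM12 : M1 ≥ M2) (hM23 : M2 ≥ M3)
    (d12 d13 d21 d23 d31 d32 : ℝ)
    (h12 : 0 ≤ d12) (h13 : 0 ≤ d13) (h21 : 0 ≤ d21)
    (h23 : 0 ≤ d23) (h31 : 0 ≤ d31) (h32 : 0 ≤ d32)
    (hu1 : d12 + d13 ≤ min (N : ℝ) (min (M1 : ℝ) ((M2 : ℝ) + M3)))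
    (hu2 : d21 + d23 ≤ min (N : ℝ) (min (M2 : ℝ) ((M1 : ℝ) + M3)))
    (hu3 : d31 + d32 ≤ min (N : ℝ) (min (M3 : ℝ) ((M1 : ℝ) + M2)))
    (hd1 : d21 + d31 ≤ min (N : ℝ) (min (M1 : ℝ) ((M2 : ℝ) + M3)))
    (hd2 : d12 + d32 ≤ min (N : ℝ) (min (M2 : ℝ) ((M1 : ℝ) + M3)))
    (hd3 : d13 + d23 ≤ min (N : ℝ) (min (M3 : ℝ) ((M1 : ℝ) + M2)))
    (hg1 : d12 + d13 + max d23 d32 ≤ min (N : ℝ) ((M2 : ℝ) + M3))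
    (hg2 : d21 + d23 + max d13 d31 ≤ min (N : ℝ) ((M1 : ℝ) + M3))
    (hg3 : d31 + d32 + max d12 d21 ≤ min (N : ℝ) ((M1 : ℝ) + M2))
    (hg4 : d21 + d31 + max d23 d32 ≤ min (N : ℝ) ((M2 : ℝ) + M3))
    (hg5 : d12 + d32 + max d13 d31 ≤ min (N : ℝ) ((M1 : ℝ) + M3))
    (hg6 : d13 + d23 + max d12 d21 ≤ min (N : ℝ) ((M1 : ℝ) + M2)) :
    d12 + d13 + d21 + d23 + d31 + d32
      ≤ min (2 * (N : ℝ)) (min ((M1 : ℝ) + M2 + M3) (2 * (M2 : ℝ) + 2 * M3)) :=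
  stmt_4_general M1 M2 M3 N d12 d13 d21 d23 d31 d32 hu1 hu2 hu3 hg1 hg2 hg4
end

section
/- Let M_1 ≥ M_2 ≥ M_3 ≥ M_4 and N be positive integers, and let d_{ij} (i ≠ j in {1,2,3,4}) be nonnegative reals. Suppose for each i, d_{ij} + d_{ik} + d_{il} ≤ min(M_i, N, M_j + M_k + M_l) (with {j,k,l} the complement of {i}), and suppose for each i, the three-user genie bounds d_{il} + d_{jl} + d_{kl} + d_{ij} + d_{ik} + max(d_{jk}, d_{kj}) ≤ min(N, M_i + M_j + M_k) and their downlink counterparts hold. Then D_t = Σ_{i≠j} d_{ij} ≤ min(2N, M_1 + M_2 + M_3 + M_4, 2M_2 + 2M_3 + 2M_4). -/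
/-!
Summing the four per-user bounds gives `D_t ≤ Σ_i min (M_i, N, Σ_{j ≠ i} M_j)`, which is at most
`M_1 + M_2 + M_3 + M_4`, and also at most `2 (M_2 + M_3 + M_4)` once user 1's term is bounded by
`M_2 + M_3 + M_4`. Adding the uplink and downlink genie bounds for users `1, 2, 3` (indices
`0, 1, 2` in `Fin 4`) counts every `d_ij` once, except that `d_23 + d_32` is covered by the two
copies of `max (d_23, d_32)`; hence `D_t ≤ 2N`.
-/

section FourUsers

variable (d : Fin 4 → Fin 4 → ℝ)

theorem sum_offDiag_fin_four :
    (∑ i : Fin 4, ∑ j : Fin 4, if i = j then 0 else d i j) =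
      (d 0 1 + d 0 2 + d 0 3) + (d 1 0 + d 1 2 + d 1 3) + (d 2 0 + d 2 1 + d 2 3) +
        (d 3 0 + d 3 1 + d 3 2) := by
  simp only [Fin.sum_univ_four, Fin.isValue, ↓reduceIte, Fin.reduceEq, zero_add, add_zero]

theorem sum_offDiag_le_of_rowSum_le {c₀ c₁ c₂ c₃ : ℝ}
    (h₀ : d 0 1 + d 0 2 + d 0 3 ≤ c₀) (h₁ : d 1 0 + d 1 2 + d 1 3 ≤ c₁)
    (h₂ : d 2 0 + d 2 1 + d 2 3 ≤ c₂) (h₃ : d 3 0 + d 3 1 + d 3 2 ≤ c₃) :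
    (∑ i : Fin 4, ∑ j : Fin 4, if i = j then 0 else d i j) ≤ c₀ + c₁ + c₂ + c₃ := by
  rw [sum_offDiag_fin_four]
  linarith

theorem sum_offDiag_le_of_genie {B : ℝ}
    (hUL : d 0 3 + d 1 3 + d 2 3 + d 0 1 + d 0 2 + max (d 1 2) (d 2 1) ≤ B)
    (hDL : d 3 0 + d 3 1 + d 3 2 + d 1 0 + d 2 0 + max (d 1 2) (d 2 1) ≤ B) :
    (∑ i : Fin 4, ∑ j : Fin 4, if i = j then 0 else d i j) ≤ 2 * B := by
  rw [sum_offDiag_fin_four]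
  linarith [le_max_left (d 1 2) (d 2 1), le_max_right (d 1 2) (d 2 1)]

end FourUsers

theorem stmt_5_general (M1 M2 M3 M4 N : ℕ)
    (M : Fin 4 → ℕ) (hM : M = ![M1, M2, M3, M4])
    (d : Fin 4 → Fin 4 → ℝ)
    (hper : ∀ i j k l : Fin 4, i ≠ j → i ≠ k → i ≠ l → j ≠ k → j ≠ l → k ≠ l →
      d i j + d i k + d i l ≤ min (M i : ℝ) (min (N : ℝ) ((M j : ℝ) + M k + M l)))
    (hgenieUL : ∀ i j k l : Fin 4, i ≠ j → i ≠ k → i ≠ l → j ≠ k → j ≠ l → k ≠ l →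
      d i l + d j l + d k l + d i j + d i k + max (d j k) (d k j)
        ≤ min (N : ℝ) ((M i : ℝ) + M j + M k))
    (hgenieDL : ∀ i j k l : Fin 4, i ≠ j → i ≠ k → i ≠ l → j ≠ k → j ≠ l → k ≠ l →
      d l i + d l j + d l k + d j i + d k i + max (d j k) (d k j)
        ≤ min (N : ℝ) ((M i : ℝ) + M j + M k)) :
    (∑ i : Fin 4, ∑ j : Fin 4, if i = j then 0 else d i j)
      ≤ min (2 * (N : ℝ))
          (min ((M1 : ℝ) + M2 + M3 + M4) (2 * (M2 : ℝ) + 2 * M3 + 2 * M4)) := by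
  subst hM
  have h₀ := hper 0 1 2 3
  have h₁ := hper 1 0 2 3
  have h₂ := hper 2 0 1 3
  have h₃ := hper 3 0 1 2
  have hUL := hgenieUL 0 1 2 3
  have hDL := hgenieDL 0 1 2 3
  simp only [ne_eq, Fin.reduceEq, not_false_eq_true, forall_const, le_min_iff,
    Matrix.cons_val] at h₀ h₁ h₂ h₃ hUL hDL
  refine le_min ?_ (le_min ?_ ?_)
  · exact sum_offDiag_le_of_genie d hUL.1 hDL.1
  · exact sum_offDiag_le_of_rowSum_le d h₀.1 h₁.1 h₂.1 h₃.1
  · linarith [sum_offDiag_le_of_rowSum_le d h₀.2.2 h₁.1 h₂.1 h₃.1]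

/-- Theorem 2: total DoF bound for the 4-user MIMO relay network. -/
theorem stmt_5 (M1 M2 M3 M4 N : ℕ)
    (hM1 : 0 < M1) (hM2 : 0 < M2) (hM3 : 0 < M3) (hM4 : 0 < M4) (hN : 0 < N)
    (hM12 : M1 ≥ M2) (hM23 : M2 ≥ M3) (hM34 : M3 ≥ M4)
    (M : Fin 4 → ℕ) (hM : M = ![M1, M2, M3, M4])
    (d : Fin 4 → Fin 4 → ℝ) (hpos : ∀ i j, 0 ≤ d i j)
    (hper : ∀ i j k l : Fin 4, i ≠ j → i ≠ k → i ≠ l → j ≠ k → j ≠ l → k ≠ l →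
      d i j + d i k + d i l ≤ min (M i : ℝ) (min (N : ℝ) ((M j : ℝ) + M k + M l)))
    (hgenieUL : ∀ i j k l : Fin 4, i ≠ j → i ≠ k → i ≠ l → j ≠ k → j ≠ l → k ≠ l →
      d i l + d j l + d k l + d i j + d i k + max (d j k) (d k j)
        ≤ min (N : ℝ) ((M i : ℝ) + M j + M k))
    (hgenieDL : ∀ i j k l : Fin 4, i ≠ j → i ≠ k → i ≠ l → j ≠ k → j ≠ l → k ≠ l →
      d l i + d l j + d l k + d j i + d k i + max (d j k) (d k j)
        ≤ min (N : ℝ) ((M i : ℝ) + M j + M k)) :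
    (∑ i : Fin 4, ∑ j : Fin 4, if i = j then 0 else d i j)
      ≤ min (2 * (N : ℝ))
          (min ((M1 : ℝ) + M2 + M3 + M4) (2 * (M2 : ℝ) + 2 * M3 + 2 * M4)) :=
  stmt_5_general M1 M2 M3 M4 N M hM d hper hgenieUL hgenieDL
end

section
/- Let N be a positive integer and d_{ij} nonnegative integers for i ≠ j in {1,2,3,4}. Suppose that for every permutation {i,j,k,l} of {1,2,3,4}, the bound d_{il} + d_{jl} + d_{kl} + d_{ij} + d_{ik} + max(d_{jk}, d_{kj}) ≤ N holds. Then every sum of the form obtained by choosing, for each unordered pair {i,j}, one of d_{ij} or d_{ji}, such that the chosen directed edges contain no directed 3-cycle, is at most N. -/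
/-!
A tournament without directed 3-cycles is transitive, hence a linear order: listing the vertices
as `v₀, v₁, v₂, v₃` by in-degree, every selected edge points forward. The selected sum is then
`∑_{a<b} d v_a v_b`, which is the genie bound for `(i, j, k, l) = (v₀, v₁, v₂, v₃)` with
`max (d j k) (d k j)` replaced by the smaller `d j k`.
-/

open Finset Function

section Tournament

variable {α : Type*} {sel : α → α → Bool}

variable (sel) in
def IsTournament : Prop := ∀ i j : α, i ≠ j → (sel i j = true ↔ ¬ sel j i = true)

variable (sel) in
def NoThreeCycle : Prop := ∀ a b c : α, a ≠ b → b ≠ c → a ≠ c →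
  ¬ (sel a b = true ∧ sel b c = true ∧ sel c a = true)

theorem sel_trans_of_no_cycle
    (hsel : IsTournament sel) (hnocycle : NoThreeCycle sel)
    {a b c : α} (hab : a ≠ b) (hbc : b ≠ c) (hac : a ≠ c)
    (h₁ : sel a b = true) (h₂ : sel b c = true) : sel a c = true := by
  by_contra hca
  exact hnocycle a b c hab hbc hac ⟨h₁, h₂, (hsel c a hac.symm).2 hca⟩

variable [Fintype α] [DecidableEq α]

variable (sel) in
def inDegree (a : α) : ℕ := #{b | b ≠ a ∧ sel b a = true}

theorem inDegree_lt_card (a : α) : inDegree sel a < Fintype.card α :=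
  card_lt_univ_of_notMem (s := {b | b ≠ a ∧ sel b a = true}) (x := a) (by simp)

theorem inDegree_lt_inDegree
    (hsel : IsTournament sel) (hnocycle : NoThreeCycle sel)
    {a b : α} (hab : a ≠ b) (h : sel a b = true) : inDegree sel a < inDegree sel b := by
  refine card_lt_card ⟨fun x hx => ?_, fun hsub => ?_⟩
  · simp only [mem_filter, mem_univ, true_and] at hx ⊢
    have hxb : x ≠ b := by
      rintro rfl
      exact (hsel a x hab).1 h hx.2
    exact ⟨hxb, sel_trans_of_no_cycle hsel hnocycle hx.1 hab hxb hx.2 h⟩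
  · exact (mem_filter.1 (hsub (mem_filter.2 ⟨mem_univ a, hab, h⟩))).2.1 rfl

theorem inDegree_injective
    (hsel : IsTournament sel) (hnocycle : NoThreeCycle sel) :
    Injective (inDegree sel) := by
  intro a b hab
  by_contra hne
  by_cases h : sel a b = true
  · exact (inDegree_lt_inDegree hsel hnocycle hne h).ne hab
  · exact (inDegree_lt_inDegree hsel hnocycle (Ne.symm hne)
      ((hsel b a (Ne.symm hne)).2 h)).ne hab.symm

theorem exists_equiv_fin_of_no_cycle {n : ℕ} (hn : Fintype.card α = n)
    (hsel : IsTournament sel) (hnocycle : NoThreeCycle sel) :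
    ∃ e : Fin n ≃ α, ∀ i j, i < j → sel (e i) (e j) = true := by
  let rank : α → Fin n := fun a => ⟨inDegree sel a, hn ▸ inDegree_lt_card a⟩
  have hrank : Injective rank := fun a b h =>
    inDegree_injective hsel hnocycle (congrArg Fin.val h)
  have hbij : Bijective rank :=
    (Fintype.bijective_iff_injective_and_card rank).2 ⟨hrank, by simp [hn]⟩
  let e := Equiv.ofBijective rank hbij
  refine ⟨e.symm, fun i j hij => ?_⟩
  have hne : e.symm i ≠ e.symm j := e.symm.injective.ne hij.ne
  by_contra h
  have hji : e (e.symm j) < e (e.symm i) :=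
    inDegree_lt_inDegree hsel hnocycle hne.symm ((hsel _ _ hne.symm).2 h)
  rw [e.apply_symm_apply, e.apply_symm_apply] at hji
  exact hji.asymm hij

end Tournament

section SymmetricSum

variable {α : Type*} [Fintype α] [LinearOrder α]

theorem two_mul_sum_lt_eq_sum_ne (F : α → α → ℕ) (hF : ∀ a b, a ≠ b → F a b = F b a) :
    2 * ∑ p ∈ univ.filter (fun p : α × α => p.1 < p.2), F p.1 p.2 =
      ∑ p ∈ univ.filter (fun p : α × α => p.1 ≠ p.2), F p.1 p.2 := by
  have hswap : ∑ p ∈ univ.filter (fun p : α × α => p.2 < p.1), F p.1 p.2 =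
      ∑ p ∈ univ.filter (fun p : α × α => p.1 < p.2), F p.1 p.2 :=
    sum_equiv (Equiv.prodComm α α) (by simp) fun p hp =>
      hF _ _ (mem_filter.1 hp).2.ne'
  rw [two_mul]
  nth_rw 2 [← hswap]
  rw [← sum_union (disjoint_filter.2 fun p _ h => not_lt_of_gt h), ← filter_or]
  simp only [ne_iff_lt_or_gt]

theorem sum_lt_comp_equiv {β : Type*} [Fintype β] [LinearOrder β] (e : β ≃ α)
    (F : α → α → ℕ) (hF : ∀ a b, a ≠ b → F a b = F b a) :
    ∑ p ∈ univ.filter (fun p : β × β => p.1 < p.2), F (e p.1) (e p.2) =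
      ∑ p ∈ univ.filter (fun p : α × α => p.1 < p.2), F p.1 p.2 := by
  refine Nat.eq_of_mul_eq_mul_left two_pos ?_
  rw [two_mul_sum_lt_eq_sum_ne _ fun a b h => hF _ _ (e.injective.ne h),
    two_mul_sum_lt_eq_sum_ne F hF]
  exact sum_equiv (e.prodCongr e) (by simp) fun _ _ => rfl

end SymmetricSum

theorem sum_filter_lt_fin_four (g : Fin 4 → Fin 4 → ℕ) :
    ∑ p ∈ univ.filter (fun p : Fin 4 × Fin 4 => p.1 < p.2), g p.1 p.2 =
      g 0 1 + g 0 2 + g 0 3 + g 1 2 + g 1 3 + g 2 3 := by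
  rw [sum_filter, Fintype.sum_prod_type]
  simp [Fin.sum_univ_four]
  ring

theorem stmt_6_general (N : ℕ) (d : Fin 4 → Fin 4 → ℕ)
    (hgenie : ∀ i j k l : Fin 4, i ≠ j → i ≠ k → i ≠ l → j ≠ k → j ≠ l → k ≠ l →
      d i l + d j l + d k l + d i j + d i k + max (d j k) (d k j) ≤ N)
    (sel : Fin 4 → Fin 4 → Bool)
    (hsel : ∀ i j : Fin 4, i ≠ j → (sel i j = true ↔ ¬ sel j i = true))
    (hnocycle : ∀ a b c : Fin 4, a ≠ b → b ≠ c → a ≠ c →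
      ¬ (sel a b = true ∧ sel b c = true ∧ sel c a = true)) :
    (∑ p ∈ Finset.univ.filter (fun p : Fin 4 × Fin 4 => p.1 < p.2),
      if sel p.1 p.2 then d p.1 p.2 else d p.2 p.1) ≤ N := by
  obtain ⟨e, he⟩ := exists_equiv_fin_of_no_cycle (Fintype.card_fin 4) hsel hnocycle
  have hsymm : ∀ a b, a ≠ b →
      (if sel a b then d a b else d b a) = if sel b a then d b a else d a b := by
    intro a b hab
    by_cases h : sel a b = true
    · simp [h, (hsel a b hab).1 h]
    · simp [h, (hsel b a hab.symm).2 h]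
  rw [← sum_lt_comp_equiv e _ hsymm,
    sum_congr rfl fun p hp => if_pos (he _ _ (mem_filter.1 hp).2),
    sum_filter_lt_fin_four fun a b => d (e a) (e b)]
  have hbound := hgenie (e 0) (e 1) (e 2) (e 3) (by simp) (by simp) (by simp) (by simp) (by simp)
    (by simp)
  have hmax := le_max_left (d (e 1) (e 2)) (d (e 2) (e 1))
  omega

/-- Any cycle-free selection of one direction per unordered pair is bounded by N
(4-user relay network). -/
theorem stmt_6 (N : ℕ) (hN : 0 < N) (d : Fin 4 → Fin 4 → ℕ)
    (hgenie : ∀ i j k l : Fin 4, i ≠ j → i ≠ k → i ≠ l → j ≠ k → j ≠ l → k ≠ l →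
      d i l + d j l + d k l + d i j + d i k + max (d j k) (d k j) ≤ N)
    (sel : Fin 4 → Fin 4 → Bool)
    (hsel : ∀ i j : Fin 4, i ≠ j → (sel i j = true ↔ ¬ sel j i = true))
    (hnocycle : ∀ a b c : Fin 4, a ≠ b → b ≠ c → a ≠ c →
      ¬ (sel a b = true ∧ sel b c = true ∧ sel c a = true)) :
    (∑ p ∈ Finset.univ.filter (fun p : Fin 4 × Fin 4 => p.1 < p.2),
      if sel p.1 p.2 then d p.1 p.2 else d p.2 p.1) ≤ N :=
  stmt_6_general N d hgenie sel hsel hnocycle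
end

section
/- Let d_{12}, d_{13}, d_{21}, d_{23}, d_{31}, d_{32} be nonnegative integers. If max(d_{12},d_{21}) + max(d_{13},d_{31}) + max(d_{23},d_{32}) > N for a positive integer N, while d_{12}+d_{13}+max(d_{23},d_{32}) ≤ N, d_{21}+d_{31}+max(d_{23},d_{32}) ≤ N, d_{21}+d_{23}+max(d_{13},d_{31}) ≤ N, d_{12}+d_{32}+max(d_{13},d_{31}) ≤ N, d_{31}+d_{32}+max(d_{12},d_{21}) ≤ N, and d_{13}+d_{23}+max(d_{12},d_{21}) ≤ N, then either max(d_{12},d_{21}) + max(d_{13},d_{31}) + max(d_{23},d_{32}) = d_{12}+d_{23}+d_{31} or it equals d_{21}+d_{13}+d_{32}; i.e., the maximizers form a directed 3-cycle. -/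
/-!
Orient each pair `{i, j}` from the index whose `d` attains `max d_ij d_ji`. This is a tournament
on three vertices, so it is either a directed 3-cycle or has a source `i`. At a source the two
maxima involving `i` are `d_ij` and `d_ik`, so `N̄ = d_ij + d_ik + max d_jk d_kj`, which the genie
bound at `i` caps by `N`.
-/

theorem max_add_max_add_le_of_le {α : Type*} [AddCommMonoid α] [LinearOrder α]
    [IsOrderedAddMonoid α] {a a' b b' c N : α} (ha : a' ≤ a) (hb : b' ≤ b)
    (h : a + b + c ≤ N) : max a a' + max b b' + c ≤ N := by
  rwa [max_eq_left ha, max_eq_left hb]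

theorem stmt_17_general (d12 d13 d21 d23 d31 d32 N : ℕ)
    (hbar : max d12 d21 + max d13 d31 + max d23 d32 > N)
    (h1 : d12 + d13 + max d23 d32 ≤ N)
    (h3 : d21 + d23 + max d13 d31 ≤ N)
    (h5 : d31 + d32 + max d12 d21 ≤ N) :
    max d12 d21 + max d13 d31 + max d23 d32 = d12 + d23 + d31 ∨
    max d12 d21 + max d13 d31 + max d23 d32 = d21 + d13 + d32 := by
  have source1 (h12 : d21 ≤ d12) (h13 : d31 ≤ d13) : False :=
    hbar.not_ge (max_add_max_add_le_of_le h12 h13 h1)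
  have source2 (h21 : d12 ≤ d21) (h23 : d32 ≤ d23) : False := by
    have := max_add_max_add_le_of_le h21 h23 h3
    rw [max_comm d21 d12, add_right_comm] at this
    exact hbar.not_ge this
  have source3 (h31 : d13 ≤ d31) (h32 : d23 ≤ d32) : False := by
    have := max_add_max_add_le_of_le h31 h32 h5
    rw [max_comm d31 d13, max_comm d32 d23, add_comm, ← add_assoc] at this
    exact hbar.not_ge this
  rcases le_total d21 d12 with h12 | h21
  · rcases le_total d31 d13 with h13 | h31
    · exact (source1 h12 h13).elim
    rcases le_total d32 d23 with h23 | h32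
    · left
      rw [max_eq_left h12, max_eq_right h31, max_eq_left h23, add_right_comm]
    · exact (source3 h31 h32).elim
  · rcases le_total d32 d23 with h23 | h32
    · exact (source2 h21 h23).elim
    rcases le_total d31 d13 with h13 | h31
    · right
      rw [max_eq_right h21, max_eq_left h13, max_eq_right h32]
    · exact (source3 h31 h32).elim

/-- For the MIMO Y channel, if N̄ = Σ max(d_ij, d_ji) exceeds N while all genie
bounds (restricted to N) hold, the maximizers must form a directed 3-cycle. -/
theorem stmt_17 (d12 d13 d21 d23 d31 d32 N : ℕ) (hN : 0 < N)
    (hbar : max d12 d21 + max d13 d31 + max d23 d32 > N)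
    (h1 : d12 + d13 + max d23 d32 ≤ N)
    (h2 : d21 + d31 + max d23 d32 ≤ N)
    (h3 : d21 + d23 + max d13 d31 ≤ N)
    (h4 : d12 + d32 + max d13 d31 ≤ N)
    (h5 : d31 + d32 + max d12 d21 ≤ N)
    (h6 : d13 + d23 + max d12 d21 ≤ N) :
    max d12 d21 + max d13 d31 + max d23 d32 = d12 + d23 + d31 ∨
    max d12 d21 + max d13 d31 + max d23 d32 = d21 + d13 + d32 :=
  stmt_17_general d12 d13 d21 d23 d31 d32 N hbar h1 h3 h5
end
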